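/- arXiv:2512.09774 — 2 statements merged into one kernel-verified Lean document; each statement's English description precedes it below -/
import Mathlib

section
/- Let A : ℝ² → ℝ² be an invertible real affine transformation. If there exist round circles C₁ and C₂ in the plane such that A(C₁) = C₂, then A is a similarity transformation (i.e., there is k > 0 with dist(A x, A y) = k · dist(x, y) for all x, y). -/
/-!
Write the affine map as `v ↦ T v + w`. Translating, the image of the sphere of radius `r₁` about
`0` under the linear part `T` is a sphere of radius `r₂` about some centre `c`. This image is
symmetric under `v ↦ -v`, which forces `c = 0`; so `T` maps the `r₁`-sphere about `0` into the
`r₂`-sphere about `0`, and by homogeneity `‖T v‖ = (r₂ / r₁) ‖v‖` for every `v`.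
-/

open Metric Set Pointwise

section

variable {E F : Type*} [NormedAddCommGroup E] [NormedSpace ℝ E] [NormedAddCommGroup F]
  [NormedSpace ℝ F]

theorem eq_zero_of_forall_neg_mem_sphere {c : E} {r : ℝ} (hr : 0 ≤ r)
    (h : ∀ v ∈ sphere c r, -v ∈ sphere c r) : c = 0 := by
  by_contra hc
  -- the point of `sphere c r` farthest from `0` along `c`: its negative is at distance `2‖c‖ + r`
  have hc' : 0 < ‖c‖ := norm_pos_iff.mpr hc
  have hv : c + (r / ‖c‖) • c ∈ sphere c r := by
    rw [mem_sphere_iff_norm, add_sub_cancel_left, norm_smul, Real.norm_of_nonneg (by positivity),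
      div_mul_cancel₀ _ hc'.ne']
  have hnv := h _ hv
  rw [mem_sphere_iff_norm, show -(c + (r / ‖c‖) • c) - c = -((2 + r / ‖c‖) • c) by module,
    norm_neg, norm_smul, Real.norm_of_nonneg (by positivity), add_mul,
    div_mul_cancel₀ _ hc'.ne'] at hnv
  linarith

theorem LinearMap.center_eq_zero_of_image_sphere (T : E →ₗ[ℝ] F) {c : F} {r₁ r₂ : ℝ}
    (hr₂ : 0 ≤ r₂) (h : T '' sphere 0 r₁ = sphere c r₂) : c = 0 := by
  refine eq_zero_of_forall_neg_mem_sphere hr₂ fun v hv => ?_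
  obtain ⟨u, hu, rfl⟩ := h ▸ hv
  exact h ▸ ⟨-u, by simpa using hu, map_neg T u⟩

theorem LinearMap.norm_map_eq_of_mapsTo_sphere (T : E →ₗ[ℝ] F) {r₁ r₂ : ℝ} (hr₁ : 0 < r₁)
    (h : MapsTo T (sphere 0 r₁) (sphere 0 r₂)) (v : E) : ‖T v‖ = r₂ / r₁ * ‖v‖ := by
  rcases eq_or_ne v 0 with rfl | hv
  · simp
  have hv' : 0 < ‖v‖ := norm_pos_iff.mpr hv
  have hu : (r₁ / ‖v‖) • v ∈ sphere (0 : E) r₁ := by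
    rw [mem_sphere_zero_iff_norm, norm_smul, Real.norm_of_nonneg (by positivity),
      div_mul_cancel₀ _ hv'.ne']
  have hTu := h hu
  rw [mem_sphere_zero_iff_norm, map_smul, norm_smul, Real.norm_of_nonneg (by positivity)] at hTu
  field_simp at hTu ⊢
  linarith

theorem LinearMap.image_sphere_zero_of_image_sphere (T : E →ₗ[ℝ] F) (w : F) {c₁ : E} {c₂ : F}
    {r₁ r₂ : ℝ} (h : (fun v => T v + w) '' sphere c₁ r₁ = sphere c₂ r₂) :
    T '' sphere 0 r₁ = sphere (-(T c₁ + w) + c₂) r₂ := by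
  have hA : (fun v => T v + w) '' sphere c₁ r₁ = (T c₁ + w) +ᵥ T '' sphere 0 r₁ := by
    rw [← vadd_sphere_zero r₁ c₁, ← image_vadd, ← image_vadd, image_image, image_image]
    congr 1
    funext u
    simp only [vadd_eq_add, map_add]
    abel
  rw [← vadd_eq_add, ← vadd_sphere, ← h, hA, neg_vadd_vadd]

end

theorem affine_circle_to_circle
    (T : EuclideanSpace ℝ (Fin 2) ≃ₗ[ℝ] EuclideanSpace ℝ (Fin 2))
    (w : EuclideanSpace ℝ (Fin 2))
    (A : EuclideanSpace ℝ (Fin 2) → EuclideanSpace ℝ (Fin 2))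
    (hA : ∀ v, A v = T v + w)
    (c₁ c₂ : EuclideanSpace ℝ (Fin 2)) (r₁ r₂ : ℝ)
    (hr₁ : 0 < r₁) (hr₂ : 0 < r₂)
    (him : A '' Metric.sphere c₁ r₁ = Metric.sphere c₂ r₂) :
    ∃ k > 0, ∀ x y, dist (A x) (A y) = k * dist x y := by
  obtain rfl : A = fun v => T v + w := funext hA
  have hT := T.toLinearMap.image_sphere_zero_of_image_sphere w him
  rw [T.toLinearMap.center_eq_zero_of_image_sphere hr₂.le hT] at hT
  refine ⟨r₂ / r₁, by positivity, fun x y => ?_⟩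
  rw [dist_eq_norm, dist_eq_norm, add_sub_add_right_eq_sub, ← map_sub]
  exact T.toLinearMap.norm_map_eq_of_mapsTo_sphere hr₁ (hT ▸ mapsTo_image _ _) (x - y)
end

section
/- Let f : [0,1] → ℝ be continuous, and let A ⊆ [0,1] be the set of points where f is differentiable with derivative zero. Then f(A) is a Lebesgue-null subset of ℝ. -/
open Set MeasureTheory

theorem Real.addHaar_image_eq_zero_of_hasDerivWithinAt_zero (μ : Measure ℝ) [μ.IsAddHaarMeasure]
    {f : ℝ → ℝ} {s : Set ℝ} (hf : ∀ x ∈ s, HasDerivWithinAt f 0 s x) : μ (f '' s) = 0 := by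
  refine addHaar_image_eq_zero_of_det_fderivWithin_eq_zero μ (f' := fun _ => 0)
    (fun x hx => ?_) (fun _ _ => by simp)
  simpa using (hf x hx).hasFDerivWithinAt

theorem image_zero_derivative_null_general (f : ℝ → ℝ) :
    volume (f '' {x : ℝ | x ∈ Icc (0:ℝ) 1 ∧ HasDerivWithinAt f 0 (Icc (0:ℝ) 1) x}) = 0 :=
  Real.addHaar_image_eq_zero_of_hasDerivWithinAt_zero volume fun _ hx =>
    hx.2.mono fun _ hy => hy.1

theorem image_zero_derivative_null (f : ℝ → ℝ) (hf : ContinuousOn f (Icc (0:ℝ) 1)) :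
    volume (f '' {x : ℝ | x ∈ Icc (0:ℝ) 1 ∧ HasDerivWithinAt f 0 (Icc (0:ℝ) 1) x}) = 0 :=
  image_zero_derivative_null_general f
end
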